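/- arXiv:1610.05200 — 2 statements merged into one kernel-verified Lean document; each statement's English description precedes it below -/
import Mathlib

section
/- Let X be an n×n real symmetric matrix with eigendecomposition X = ∑_i λ_i v_i v_i^*, let A be an n×n real symmetric matrix, and let p ≥ 1 and 0 ≤ ℓ ≤ 2p−2 be integers. Then Tr[A X^ℓ A X^{2p−2−ℓ}] ≤ Tr[A² X^{2p−2}]. -/
open Matrix in

lemma trace_form {n : ℕ} (P Q : Matrix (Fin n) (Fin n) ℝ) :
    (Pᵀ * Q).trace = ∑ x : Fin n × Fin n, P x.1 x.2 * Q x.1 x.2 := by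
  rw [Fintype.sum_prod_type]
  simp only [Matrix.trace, Matrix.diag, Matrix.mul_apply, Matrix.transpose_apply]
  exact Finset.sum_comm

open Matrix in
lemma trace_cs {n : ℕ} (M N : Matrix (Fin n) (Fin n) ℝ) :
    (Mᵀ * N).trace ^ 2 ≤ (Mᵀ * M).trace * (Nᵀ * N).trace := by
  rw [trace_form, trace_form, trace_form]
  simpa only [sq] using Finset.sum_mul_sq_le_sq_mul_sq Finset.univ
    (fun x : Fin n × Fin n => M x.1 x.2) (fun x => N x.1 x.2)

open Matrix in
lemma trace_sq_nonneg {n : ℕ} (P : Matrix (Fin n) (Fin n) ℝ) :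
    0 ≤ (Pᵀ * P).trace := by
  rw [trace_form]
  exact Finset.sum_nonneg fun x _ => mul_self_nonneg _

open Matrix in
lemma gen_eq {n : ℕ} (X A : Matrix (Fin n) (Fin n) ℝ) (hX : X.IsSymm) (hA : A.IsSymm)
    (q u v : ℕ) (hu : u ≤ q) (hv : v ≤ q) :
    ((X ^ u * A * X ^ (q - u))ᵀ * (X ^ v * A * X ^ (q - v))).trace
      = (A * X ^ (u + v) * A * X ^ (2 * q - (u + v))).trace := by
  have hXp : ∀ k : ℕ, (X ^ k)ᵀ = X ^ k := fun k => (hX.pow k).eq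
  have e1 : (X ^ u * A * X ^ (q - u))ᵀ = X ^ (q - u) * (A * X ^ u) := by
    simp [Matrix.transpose_mul, hXp, hA.eq, Matrix.mul_assoc]
  rw [e1]
  rw [show X ^ (q - u) * (A * X ^ u) * (X ^ v * A * X ^ (q - v))
      = X ^ (q - u) * (A * X ^ u * (X ^ v * A * X ^ (q - v))) from by
    simp [Matrix.mul_assoc]]
  rw [Matrix.trace_mul_comm]
  rw [show 2 * q - (u + v) = (q - v) + (q - u) from by omega]
  congr 1
  simp [Matrix.mul_assoc, pow_add]

open Matrix in
lemma key_lem {n : ℕ} (X A : Matrix (Fin n) (Fin n) ℝ) (hX : X.IsSymm) (hA : A.IsSymm)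
    (q a c : ℕ) (ha : a ≤ q) (hc : c ≤ q) :
    (A * X ^ (a + c) * A * X ^ (2 * q - (a + c))).trace ^ 2 ≤
      (A * X ^ (2 * a) * A * X ^ (2 * q - 2 * a)).trace *
        (A * X ^ (2 * c) * A * X ^ (2 * q - 2 * c)).trace := by
  have h := trace_cs (X ^ a * A * X ^ (q - a)) (X ^ c * A * X ^ (q - c))
  rw [gen_eq X A hX hA q a c ha hc, gen_eq X A hX hA q a a ha ha,
    gen_eq X A hX hA q c c hc hc] at h
  rw [two_mul a, two_mul c]
  exact h

/-- **Exchange lemma.** For `n×n` real symmetric matrices `A`, `X`, integers `p ≥ 1` and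
`0 ≤ ℓ ≤ 2p−2`: `Tr[A X^ℓ A X^{2p−2−ℓ}] ≤ Tr[A² X^{2p−2}]`. -/
theorem stmt_4 {n : ℕ} (X A : Matrix (Fin n) (Fin n) ℝ) (hX : X.IsSymm) (hA : A.IsSymm)
    (p ℓ : ℕ) (hp : 1 ≤ p) (hℓ : ℓ ≤ 2 * p - 2) :
    (A * X ^ ℓ * A * X ^ (2 * p - 2 - ℓ)).trace ≤ (A ^ 2 * X ^ (2 * p - 2)).trace := by
  obtain ⟨q, rfl⟩ : ∃ q, p = q + 1 := ⟨p - 1, by omega⟩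
  rw [show 2 * (q + 1) - 2 = 2 * q from by omega] at hℓ ⊢
  let F : ℕ → ℝ := fun k => (A * X ^ k * A * X ^ (2 * q - k)).trace
  have htarget : (A ^ 2 * X ^ (2 * q)).trace = F 0 := by
    show _ = (A * X ^ 0 * A * X ^ (2 * q - 0)).trace
    simp [pow_two, Matrix.mul_assoc]
  have hFm : F (2 * q) = F 0 := by
    show (A * X ^ (2 * q) * A * X ^ (2 * q - 2 * q)).trace
      = (A * X ^ 0 * A * X ^ (2 * q - 0)).trace
    rw [Nat.sub_self, Nat.sub_zero, pow_zero, Matrix.mul_one, Matrix.mul_one,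
      Matrix.trace_mul_comm]
    congr 1
    simp [Matrix.mul_assoc]
  have h0 : 0 ≤ F 0 := by
    have h := trace_sq_nonneg (X ^ q * A * X ^ (q - q))
    rw [gen_eq X A hX hA q q q le_rfl le_rfl] at h
    rw [← hFm]
    show 0 ≤ (A * X ^ (2 * q) * A * X ^ (2 * q - 2 * q)).trace
    rw [show q + q = 2 * q from (two_mul q).symm] at h
    exact h
  have hne : (Finset.range (2 * q + 1)).Nonempty := ⟨0, by simp⟩
  obtain ⟨j, hj, hjeq⟩ := Finset.exists_mem_eq_sup' hne F
  set Msup := (Finset.range (2 * q + 1)).sup' hne F with hM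
  have hjle : j ≤ 2 * q := by have := Finset.mem_range.mp hj; omega
  have h0le : F 0 ≤ Msup := Finset.le_sup' F (Finset.mem_range.mpr (by omega))
  have hMle : Msup ≤ F 0 := by
    set a := min j q with hadef
    set c := j - a with hcdef
    have ha : a ≤ q := min_le_right _ _
    have hc : c ≤ q := by omega
    have hac : a + c = j := by omega
    have hkey : F (a + c) ^ 2 ≤ F (2 * a) * F (2 * c) :=
      key_lem X A hX hA q a c ha hc
    rw [hac] at hkey
    rcases le_or_gt j q with hcase | hcase
    · -- a = j, c = 0
      have haj : a = j := by omega
      have hc0 : c = 0 := by omega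
      rw [haj, hc0, mul_zero] at hkey
      have hk_le : F (2 * j) ≤ Msup :=
        Finset.le_sup' F (Finset.mem_range.mpr (by omega))
      nlinarith [hjeq ▸ hkey, hk_le, h0le, h0]
    · -- a = q, so F (2*a) = F (2*q) = F 0
      have haq : a = q := by omega
      rw [haq, hFm] at hkey
      have hk_le : F (2 * c) ≤ Msup :=
        Finset.le_sup' F (Finset.mem_range.mpr (by omega))
      nlinarith [hjeq ▸ hkey, hk_le, h0le, h0]
  calc (A * X ^ ℓ * A * X ^ (2 * q - ℓ)).trace
      = F ℓ := rfl
    _ ≤ Msup := Finset.le_sup' F (Finset.mem_range.mpr (by omega))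
    _ ≤ F 0 := hMle
    _ = (A ^ 2 * X ^ (2 * q)).trace := htarget.symm
end

section
/- Let b_{ij} = b_{ji} ≥ 0 be given and let X be the n×n symmetric random matrix with X_{ij} = b_{ij} g_{ij}, g_{ij} i.i.d. standard Gaussian (modulo symmetry). Define x : ℝ^n → ℝ^n by x_i(v) = v_i (∑_j b_{ij}² v_j²)^{1/2}. Then for all v, w ∈ ℝ^n, E[(⟨v,Xv⟩ − ⟨w,Xw⟩)²] ≤ 4‖x(v) − x(w)‖² − ∑_{i,j} (v_i² − w_i²) b_{ij}² (v_j² − w_j²). -/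
/-!
Expanding the square, `E[(⟨v,Xv⟩ - ⟨w,Xw⟩)²]` is the sum of the squared coefficients of the
independent standard Gaussians `g_{ij}`, `i ≤ j`. Each coefficient collects at most two of the
terms `b_{ij} (v_i v_j - w_i w_j)`, so the expectation is at most
`2 ∑_{ij} b_{ij}² (v_i v_j - w_i w_j)²`.

The rest is deterministic. With `A_i = ∑_j b_{ij}² v_j²` and `B_i = ∑_j b_{ij}² w_j²`, the only
term of `‖x(v) - x(w)‖²` that is not a weighted sum over pairs is the cross term
`v_i w_i √A_i √B_i`. Bound it by AM-GM when `v_i w_i ≥ 0`, and by Cauchy-Schwarz,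
`√A_i √B_i ≥ ∑_j b_{ij}² |v_j w_j|`, when `v_i w_i < 0`. What is left is a sum
`∑_{ij} b_{ij}² k(i, j)` whose kernel has `k(i, j) + k(j, i) ≥ 0`, and `b` is symmetric.
-/

open MeasureTheory ProbabilityTheory Finset

theorem ite_le_eq_min_max {ι α : Type*} [LinearOrder ι] (g : ι → ι → α) (i j : ι) :
    (if i ≤ j then g i j else g j i) = g (min i j) (max i j) := by
  split_ifs with h
  · rw [min_eq_left h, max_eq_right h]
  · rw [min_eq_right (le_of_not_ge h), max_eq_left (le_of_not_ge h)]

def upperPair {ι : Type*} [LinearOrder ι] (p : ι × ι) : {q : ι × ι // q.1 ≤ q.2} :=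
  ⟨(min p.1 p.2, max p.1 p.2), min_le_max⟩

theorem card_filter_upperPair_eq_le_two {ι : Type*} [Fintype ι] [LinearOrder ι]
    (q : {q : ι × ι // q.1 ≤ q.2}) : #{p | upperPair p = q} ≤ 2 := by
  classical
  refine (card_le_card fun p hp => ?_).trans (card_le_two (a := q.1) (b := q.1.swap))
  obtain ⟨⟨i, j⟩, hij⟩ := q
  simp only [mem_filter, mem_univ, true_and, upperPair, Subtype.mk.injEq, Prod.mk.injEq] at hp
  obtain ⟨rfl, rfl⟩ := hp
  rcases le_total p.1 p.2 with h | h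
  · simp [min_eq_left h, max_eq_right h]
  · simp [min_eq_right h, max_eq_left h]

theorem sum_mul_comp_eq_sum_fiberwise {α β R : Type*} [Fintype α] [Fintype β] [DecidableEq β]
    [CommSemiring R] (π : α → β) (F : α → R) (G : β → R) :
    ∑ p, F p * G (π p) = ∑ q, (∑ p with π p = q, F p) * G q := by
  rw [← sum_fiberwise univ π]
  refine sum_congr rfl fun q _ => ?_
  rw [sum_mul]
  exact sum_congr rfl fun p hp => by rw [(mem_filter.1 hp).2]

theorem sum_sq_sum_fiberwise_le {α β : Type*} [Fintype α] [Fintype β] [DecidableEq β]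
    (π : α → β) {k : ℕ} (hk : ∀ q, #{p | π p = q} ≤ k) (F : α → ℝ) :
    ∑ q, (∑ p with π p = q, F p) ^ 2 ≤ k * ∑ p, F p ^ 2 := by
  calc ∑ q, (∑ p with π p = q, F p) ^ 2
      ≤ ∑ q, k * ∑ p with π p = q, F p ^ 2 := sum_le_sum fun q _ =>
        sq_sum_le_card_mul_sum_sq.trans
          (mul_le_mul_of_nonneg_right (by exact_mod_cast hk q) (sum_nonneg fun p _ => sq_nonneg _))
    _ = k * ∑ p, F p ^ 2 := by rw [← mul_sum, sum_fiberwise]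

section Gaussian

variable {Ω : Type*} [MeasurableSpace Ω] {μ : Measure Ω} [IsProbabilityMeasure μ]

theorem integral_sq_sum_mul_of_iIndepFun_gaussian {ι : Type*} [Fintype ι] {G : ι → Ω → ℝ}
    (hG : ∀ q, HasLaw (G q) (gaussianReal 0 1) μ) (hind : iIndepFun G μ) (c : ι → ℝ) :
    ∫ ω, (∑ q, c q * G q ω) ^ 2 ∂μ = ∑ q, c q ^ 2 := by
  have hL2 : ∀ q, MemLp (fun ω => c q * G q ω) 2 μ := fun q =>
    ((memLp_map_measure_iff aestronglyMeasurable_id (hG q).aemeasurable).1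
      ((hG q).map_eq ▸ memLp_id_gaussianReal 2)).const_mul (c q)
  have hsum : (fun ω => ∑ q, c q * G q ω) = ∑ q, fun ω => c q * G q ω := by
    ext ω
    simp
  have hmean : ∫ ω, ∑ q, c q * G q ω ∂μ = 0 := by
    rw [integral_finsetSum _ fun q _ => (hL2 q).integrable one_le_two]
    simp [integral_const_mul, (hG _).integral_eq]
  rw [← variance_of_integral_eq_zero (by fun_prop) hmean, hsum,
    IndepFun.variance_sum (fun q _ => hL2 q) fun q _ r _ hqr =>
      (hind.indepFun hqr).comp (measurable_const_mul (c q)) (measurable_const_mul (c r))]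
  simp [variance_const_mul, (hG _).variance_eq]

theorem integral_sq_sum_mul_symmetric_gaussian_le {ι : Type*} [Fintype ι] [LinearOrder ι]
    {g : ι → ι → Ω → ℝ}
    (hg : ∀ q : {q : ι × ι // q.1 ≤ q.2}, HasLaw (g q.1.1 q.1.2) (gaussianReal 0 1) μ)
    (hind : iIndepFun (fun q : {q : ι × ι // q.1 ≤ q.2} => g q.1.1 q.1.2) μ) (F : ι → ι → ℝ) :
    ∫ ω, (∑ i, ∑ j, F i j * (if i ≤ j then g i j ω else g j i ω)) ^ 2 ∂μ ≤
      2 * ∑ i, ∑ j, F i j ^ 2 := by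
  classical
  have hregroup : ∀ ω, ∑ i, ∑ j, F i j * (if i ≤ j then g i j ω else g j i ω) =
      ∑ q, (∑ p with upperPair p = q, F p.1 p.2) * g q.1.1 q.1.2 ω := fun ω => by
    rw [← sum_mul_comp_eq_sum_fiberwise upperPair (fun p => F p.1 p.2), Fintype.sum_prod_type]
    exact sum_congr rfl fun i _ => sum_congr rfl fun j _ => by
      rw [ite_le_eq_min_max (fun i j => g i j ω)]; rfl
  simp_rw [hregroup]
  rw [integral_sq_sum_mul_of_iIndepFun_gaussian hg hind, ← Fintype.sum_prod_type']
  exact_mod_cast sum_sq_sum_fiberwise_le upperPair card_filter_upperPair_eq_le_two _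

end Gaussian

theorem two_mul_mul_sqrt_mul_sqrt_le {t A B K : ℝ} (hA : 0 ≤ A) (hB : 0 ≤ B)
    (hKAB : K ≤ √A * √B) :
    2 * t * (√A * √B) ≤ t⁺ * (A + B) - 2 * t⁻ * K := by
  rcases le_or_gt 0 t with ht | ht
  · rw [posPart_eq_self.2 ht, negPart_eq_zero.2 ht]
    nlinarith [sq_nonneg (√A - √B), Real.sq_sqrt hA, Real.sq_sqrt hB]
  · rw [posPart_eq_zero.2 ht.le, negPart_eq_neg.2 ht.le]
    nlinarith

theorem sum_mul_abs_mul_le_sqrt_mul_sqrt {ι : Type*} (s : Finset ι) {a : ι → ℝ}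
    (ha : ∀ j, 0 ≤ a j) (x y : ι → ℝ) :
    ∑ j ∈ s, a j * |x j * y j| ≤ √(∑ j ∈ s, a j * x j ^ 2) * √(∑ j ∈ s, a j * y j ^ 2) := by
  refine le_of_eq_of_le (sum_congr rfl fun j _ => ?_)
    (Real.sum_sqrt_mul_sqrt_le s (fun j => by have := ha j; positivity)
      fun j => by have := ha j; positivity)
  rw [← Real.sqrt_mul (by have := ha j; positivity),
    show a j * x j ^ 2 * (a j * y j ^ 2) = (a j * |x j * y j|) ^ 2 by rw [mul_pow, sq_abs]; ring,
    Real.sqrt_sq (mul_nonneg (ha j) (abs_nonneg _))]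

theorem sum_row_le_four_mul_sq {ι : Type*} (s : Finset ι) {a : ι → ℝ} (ha : ∀ j, 0 ≤ a j)
    (x y : ι → ℝ) (p q : ℝ) :
    ∑ j ∈ s, a j * (4 * p ^ 2 * x j ^ 2 + 4 * q ^ 2 * y j ^ 2
        - 4 * (p * q)⁺ * (x j ^ 2 + y j ^ 2) + 8 * (p * q)⁻ * |x j * y j|) ≤
      4 * (p * √(∑ j ∈ s, a j * x j ^ 2) - q * √(∑ j ∈ s, a j * y j ^ 2)) ^ 2 := by
  set A := ∑ j ∈ s, a j * x j ^ 2
  set B := ∑ j ∈ s, a j * y j ^ 2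
  set K := ∑ j ∈ s, a j * |x j * y j|
  have hA : 0 ≤ A := sum_nonneg fun j _ => mul_nonneg (ha j) (sq_nonneg _)
  have hB : 0 ≤ B := sum_nonneg fun j _ => mul_nonneg (ha j) (sq_nonneg _)
  have hcross := two_mul_mul_sqrt_mul_sqrt_le (t := p * q) hA hB
    (sum_mul_abs_mul_le_sqrt_mul_sqrt s ha x y)
  have hrow : ∑ j ∈ s, a j * (4 * p ^ 2 * x j ^ 2 + 4 * q ^ 2 * y j ^ 2
        - 4 * (p * q)⁺ * (x j ^ 2 + y j ^ 2) + 8 * (p * q)⁻ * |x j * y j|) =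
      4 * p ^ 2 * A + 4 * q ^ 2 * B - 4 * (p * q)⁺ * (A + B) + 8 * (p * q)⁻ * K := by
    simp only [A, B, K, mul_sum, ← sum_add_distrib, ← sum_sub_distrib]
    exact sum_congr rfl fun j _ => by ring
  rw [hrow]
  nlinarith [Real.sq_sqrt hA, Real.sq_sqrt hB]

/-- The kernel `k(i, j)` of the proof, with `s = v_i² + w_i²`, `t = v_i w_i`,
`s' = v_j² + w_j²`, `t' = v_j w_j`. -/
def pairKernel (s t s' t' : ℝ) : ℝ :=
  s * s' + 4 * t * t' - 4 * t⁺ * s' + 8 * t⁻ * |t'|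

theorem pairKernel_add_pairKernel_nonneg {s t s' t' : ℝ} (h : 2 * |t| ≤ s)
    (h' : 2 * |t'| ≤ s') : 0 ≤ pairKernel s t s' t' + pairKernel s' t' s t := by
  have hs : 2 * t ≤ s := by linarith [le_abs_self t]
  have hs' : 2 * t' ≤ s' := by linarith [le_abs_self t']
  unfold pairKernel
  rcases le_or_gt 0 t with ht | ht <;> rcases le_or_gt 0 t' with ht' | ht'
  · rw [posPart_eq_self.2 ht, negPart_eq_zero.2 ht, posPart_eq_self.2 ht', negPart_eq_zero.2 ht']
    nlinarith [mul_nonneg (sub_nonneg.2 hs) (sub_nonneg.2 hs')]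
  · rw [posPart_eq_self.2 ht, negPart_eq_zero.2 ht, posPart_eq_zero.2 ht'.le,
      negPart_eq_neg.2 ht'.le, abs_of_nonneg ht]
    nlinarith [mul_nonneg (sub_nonneg.2 hs) (abs_nonneg t')]
  · rw [posPart_eq_zero.2 ht.le, negPart_eq_neg.2 ht.le, posPart_eq_self.2 ht',
      negPart_eq_zero.2 ht', abs_of_nonneg ht']
    nlinarith [mul_nonneg (sub_nonneg.2 hs') (abs_nonneg t)]
  · rw [posPart_eq_zero.2 ht.le, negPart_eq_neg.2 ht.le, posPart_eq_zero.2 ht'.le,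
      negPart_eq_neg.2 ht'.le, abs_of_neg ht, abs_of_neg ht']
    nlinarith [mul_pos (neg_pos.2 ht) (neg_pos.2 ht'),
      mul_nonneg (h.trans' (by positivity)) (h'.trans' (by positivity))]

theorem sum_sum_mul_nonneg_of_add_swap_nonneg {ι : Type*} [Fintype ι] {W f : ι → ι → ℝ}
    (hW : ∀ i j, W i j = W j i) (hW0 : ∀ i j, 0 ≤ W i j) (hf : ∀ i j, 0 ≤ f i j + f j i) :
    0 ≤ ∑ i, ∑ j, W i j * f i j := by
  have hswap : ∑ i, ∑ j, W i j * f i j = ∑ i, ∑ j, W i j * f j i := by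
    rw [sum_comm]
    exact sum_congr rfl fun i _ => sum_congr rfl fun j _ => by rw [hW]
  have hsymm : 0 ≤ ∑ i, ∑ j, W i j * (f i j + f j i) :=
    sum_nonneg fun i _ => sum_nonneg fun j _ => mul_nonneg (hW0 i j) (hf i j)
  simp only [mul_add, sum_add_distrib, ← hswap] at hsymm
  linarith

theorem two_mul_sum_sq_add_sum_le {ι : Type*} [Fintype ι] (b : ι → ι → ℝ)
    (hbsym : ∀ i j, b i j = b j i) (v w : ι → ℝ) :
    2 * ∑ i, ∑ j, (b i j * (v i * v j - w i * w j)) ^ 2 +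
        ∑ i, ∑ j, (v i ^ 2 - w i ^ 2) * b i j ^ 2 * (v j ^ 2 - w j ^ 2) ≤
      4 * ∑ i, (v i * √(∑ j, b i j ^ 2 * v j ^ 2) - w i * √(∑ j, b i j ^ 2 * w j ^ 2)) ^ 2 := by
  set s : ι → ℝ := fun i => v i ^ 2 + w i ^ 2
  set t : ι → ℝ := fun i => v i * w i
  have hts : ∀ i, 2 * |t i| ≤ s i := fun i => by
    simp only [s, t, abs_mul]
    nlinarith [two_mul_le_add_sq |v i| |w i|, sq_abs (v i), sq_abs (w i)]
  have hrows := sum_le_sum fun i (_ : i ∈ univ) =>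
    sum_row_le_four_mul_sq univ (a := fun j => b i j ^ 2) (fun j => sq_nonneg _) v w (v i) (w i)
  have hpairs : 0 ≤ ∑ i, ∑ j, b i j ^ 2 * pairKernel (s i) (t i) (s j) (t j) :=
    sum_sum_mul_nonneg_of_add_swap_nonneg (fun i j => by rw [hbsym]) (fun i j => sq_nonneg _)
      fun i j => pairKernel_add_pairKernel_nonneg (hts i) (hts j)
  refine le_trans ?_ (hrows.trans_eq (mul_sum _ _ _).symm)
  simp only [pairKernel, mul_sum, ← sum_add_distrib] at hpairs ⊢
  refine le_of_sub_nonneg (le_of_le_of_eq hpairs ?_)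
  simp only [← sum_sub_distrib]
  exact sum_congr rfl fun i _ => sum_congr rfl fun j _ => by ring

theorem stmt_13_general {n : ℕ}
    {Ω : Type} [MeasurableSpace Ω] (μ : Measure Ω) [IsProbabilityMeasure μ]
    (b : Fin n → Fin n → ℝ) (hbsym : ∀ i j, b i j = b j i)
    (g : Fin n → Fin n → Ω → ℝ)
    (hindep : iIndepFun
      (fun q : {q : Fin n × Fin n // q.1 ≤ q.2} => g q.1.1 q.1.2) μ)
    (hg : ∀ i j : Fin n, i ≤ j → μ.map (g i j) = gaussianReal 0 1)
    (v w : Fin n → ℝ) :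
    (∫ ω,
        ((∑ i, ∑ j, v i * (b i j * (if i ≤ j then g i j ω else g j i ω)) * v j) -
          (∑ i, ∑ j, w i * (b i j * (if i ≤ j then g i j ω else g j i ω)) * w j)) ^ 2 ∂μ) ≤
      4 * (∑ i, (v i * Real.sqrt (∑ j, b i j ^ 2 * v j ^ 2) -
                  w i * Real.sqrt (∑ j, b i j ^ 2 * w j ^ 2)) ^ 2) -
        ∑ i, ∑ j, (v i ^ 2 - w i ^ 2) * b i j ^ 2 * (v j ^ 2 - w j ^ 2) := by
  have hlaw : ∀ q : {q : Fin n × Fin n // q.1 ≤ q.2},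
      HasLaw (g q.1.1 q.1.2) (gaussianReal 0 1) μ := fun q =>
    ⟨AEMeasurable.of_map_ne_zero (by simp [hg _ _ q.2, NeZero.ne]), hg _ _ q.2⟩
  calc _ = ∫ ω, (∑ i, ∑ j, b i j * (v i * v j - w i * w j) *
          (if i ≤ j then g i j ω else g j i ω)) ^ 2 ∂μ := by
        refine integral_congr_ae (ae_of_all _ fun ω => ?_)
        simp only [← sum_sub_distrib]
        exact congrArg (· ^ 2) (sum_congr rfl fun i _ => sum_congr rfl fun j _ => by ring)
    _ ≤ 2 * ∑ i, ∑ j, (b i j * (v i * v j - w i * w j)) ^ 2 :=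
        integral_sq_sum_mul_symmetric_gaussian_le hlaw hindep _
    _ ≤ _ := by linarith [two_mul_sum_sq_add_sum_le b hbsym v w]

/-- **Comparison lemma for Gaussian matrices with independent entries.** Let `X` be the
`n×n` symmetric random matrix with `X_{ij} = b_{ij} g_{ij}`, `g_{ij}` i.i.d. standard
Gaussian modulo symmetry, and let `x_i(v) = v_i (∑ⱼ b_{ij}² v_j²)^{1/2}`. Then for all
`v, w`: `E[(⟨v,Xv⟩ − ⟨w,Xw⟩)²] ≤ 4‖x(v) − x(w)‖² − ∑_{ij} (vᵢ²−wᵢ²) b_{ij}² (vⱼ²−wⱼ²)`. -/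
theorem stmt_13 {n : ℕ}
    {Ω : Type} [MeasurableSpace Ω] (μ : Measure Ω) [IsProbabilityMeasure μ]
    (b : Fin n → Fin n → ℝ) (hb0 : ∀ i j, 0 ≤ b i j) (hbsym : ∀ i j, b i j = b j i)
    (g : Fin n → Fin n → Ω → ℝ)
    (hindep : iIndepFun
      (fun q : {q : Fin n × Fin n // q.1 ≤ q.2} => g q.1.1 q.1.2) μ)
    (hg : ∀ i j : Fin n, i ≤ j → μ.map (g i j) = gaussianReal 0 1)
    (v w : Fin n → ℝ) :
    (∫ ω,
        ((∑ i, ∑ j, v i * (b i j * (if i ≤ j then g i j ω else g j i ω)) * v j) -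
          (∑ i, ∑ j, w i * (b i j * (if i ≤ j then g i j ω else g j i ω)) * w j)) ^ 2 ∂μ) ≤
      4 * (∑ i, (v i * Real.sqrt (∑ j, b i j ^ 2 * v j ^ 2) -
                  w i * Real.sqrt (∑ j, b i j ^ 2 * w j ^ 2)) ^ 2) -
        ∑ i, ∑ j, (v i ^ 2 - w i ^ 2) * b i j ^ 2 * (v j ^ 2 - w j ^ 2) :=
  stmt_13_general μ b hbsym g hindep hg v w
end
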